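/- arXiv:1901.09618 — 2 statements merged into one kernel-verified Lean document; each statement's English description precedes it below -/
import Mathlib

section
/- Let A be a unital C*-algebra and a ∈ A a positive element. Suppose there exist real numbers α, β with 0 < α < β and constants c, C > 0 such that c · r_{a^α}(f) ≤ r_{a^β}(f) ≤ C · r_{a^α}(f) for every hermitian continuous linear functional f on A. Then for every real γ > 0 the seminorms r_{a^γ} and r_a are equivalent, i.e. there exist constants c', C' > 0 with c' · r_a(f) ≤ r_{a^γ}(f) ≤ C' · r_a(f) for all hermitian continuous linear functionals f. -/
open scoped ComplexOrder NNReal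

variable {A : Type*} [CStarAlgebra A] [PartialOrder A] [StarOrderedRing A]

/-- A continuous linear functional on a C*-algebra is positive if it is nonnegative on
positive elements (using the complex order). -/
def IsPosFunctional {A : Type*} [CStarAlgebra A] [PartialOrder A] [StarOrderedRing A]
    (f : A →L[ℂ] ℂ) : Prop :=
  ∀ x : A, 0 ≤ x → 0 ≤ f x

/-- A continuous linear functional is hermitian if `f (star x) = conj (f x)` for all `x`. -/
def IsHermitianFunctional {A : Type*} [CStarAlgebra A] (f : A →L[ℂ] ℂ) : Prop :=
  ∀ x : A, f (star x) = starRingEnd ℂ (f x)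

/-- The seminorm `r_a` associated with a positive element `a`:
`r_a(f) = inf { f₁(a) + f₂(a) | f = f₁ - f₂, f₁, f₂ positive }`. -/
noncomputable def rSeminorm {A : Type*} [CStarAlgebra A] [PartialOrder A] [StarOrderedRing A]
    (a : A) (f : A →L[ℂ] ℂ) : ℝ :=
  sInf { r : ℝ | ∃ f₁ f₂ : A →L[ℂ] ℂ, IsPosFunctional f₁ ∧ IsPosFunctional f₂ ∧
    f = f₁ - f₂ ∧ (r : ℂ) = f₁ a + f₂ a }

/-! Testing `c r_{a^α} ≤ r_{a^β}` on a positive functional `f`, for which `r_x(f) = f(x)`, gives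
`c f(a^α) ≤ f(a^β)`. As `c t^α - t^β > 0` on `(0, ε)` with `ε = c^{1/(β-α)}`, compressing by
functions of `a` supported there shows that positive functionals do not see the spectrum of `a`
inside `(0, ε)`. On `{0} ∪ [ε, ‖a‖]` the functions `t^γ` and `t` are comparable, so `f(a^γ)` and
`f(a)` are comparable for positive `f`, and this passes to `r_{a^γ}` and `r_a` through the
decompositions `f = f₁ - f₂`. -/

lemma ContinuousLinearMap.re_apply_real_smul {E : Type*} [NormedAddCommGroup E]
    [NormedSpace ℂ E] (f : E →L[ℂ] ℂ) (r : ℝ) (x : E) : (f (r • x)).re = r * (f x).re := by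
  simp [f.map_smul_of_tower]

lemma IsCompact.exists_pos_le_mul {X : Type*} [TopologicalSpace X] {S : Set X}
    (hS : IsCompact S) {φ ψ : X → ℝ} (hφ : ContinuousOn φ S) (hψ : ContinuousOn ψ S)
    (hψS : ∀ t ∈ S, 0 < ψ t) : ∃ K > 0, ∀ t ∈ S, φ t ≤ K * ψ t := by
  obtain ⟨B, hB⟩ := hS.bddAbove_image (hφ.div hψ fun t ht => (hψS t ht).ne')
  refine ⟨max B 1, by positivity, fun t ht => ?_⟩
  have hBt : φ t / ψ t ≤ B := hB ⟨t, ht, rfl⟩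
  rw [div_le_iff₀ (hψS t ht)] at hBt
  exact hBt.trans (mul_le_mul_of_nonneg_right (le_max_left B 1) (hψS t ht).le)

lemma Real.rpow_lt_mul_rpow_of_lt {α β c t : ℝ} (hαβ : α < β) (hc : 0 < c) (ht : 0 < t)
    (htc : t < c ^ (β - α)⁻¹) : t ^ β < c * t ^ α := by
  have hβα : 0 < β - α := sub_pos.mpr hαβ
  have hlt : t ^ (β - α) < c := by
    simpa [← Real.rpow_mul hc.le, inv_mul_cancel₀ hβα.ne'] using
      Real.rpow_lt_rpow ht.le htc hβα
  calc t ^ β = t ^ (β - α) * t ^ α := by rw [← Real.rpow_add ht, sub_add_cancel]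
    _ < c * t ^ α := mul_lt_mul_of_pos_right hlt (Real.rpow_pos_of_pos ht α)

namespace IsPosFunctional

variable {f : A →L[ℂ] ℂ} {x y : A}

noncomputable def toPositiveLinearMap (hf : IsPosFunctional f) : A →ₚ[ℂ] ℂ :=
  PositiveLinearMap.mk₀ f.toLinearMap hf

lemma isHermitian (hf : IsPosFunctional f) : IsHermitianFunctional f :=
  map_star hf.toPositiveLinearMap

lemma re_nonneg (hf : IsPosFunctional f) (hx : 0 ≤ x) : 0 ≤ (f x).re :=
  (Complex.nonneg_iff.mp (hf x hx)).1

lemma ofReal_re (hf : IsPosFunctional f) (hx : 0 ≤ x) : ((f x).re : ℂ) = f x :=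
  (Complex.eq_re_of_ofReal_le (r := 0) (by simpa using hf x hx)).symm

lemma re_mono (hf : IsPosFunctional f) (hxy : x ≤ y) : (f x).re ≤ (f y).re :=
  (Complex.le_def.mp (hf.toPositiveLinearMap.monotone' hxy)).1

lemma comp_mulLeftRight (hf : IsPosFunctional f) {b : A} (hb : IsSelfAdjoint b) :
    IsPosFunctional (f.comp (ContinuousLinearMap.mulLeftRight ℂ A b b)) := fun x hx => by
  simpa [hb.star_eq] using hf _ (star_left_conjugate_nonneg hx b)

end IsPosFunctional

def posDecompositions (g : A →L[ℂ] ℂ) : Set ((A →L[ℂ] ℂ) × (A →L[ℂ] ℂ)) :=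
  {p | IsPosFunctional p.1 ∧ IsPosFunctional p.2 ∧ g = p.1 - p.2}

lemma rSeminorm_eq_iInf {x : A} (hx : 0 ≤ x) (g : A →L[ℂ] ℂ) :
    rSeminorm x g = ⨅ p : posDecompositions g, ((p.1.1 x).re + (p.1.2 x).re) := by
  refine congrArg sInf (Set.ext fun r => ?_)
  simp only [Set.mem_range, Subtype.exists, posDecompositions, Prod.exists]
  refine exists₂_congr fun f₁ f₂ => ⟨fun ⟨h₁, h₂, hg, hr⟩ => ⟨⟨h₁, h₂, hg⟩, ?_⟩,
    fun ⟨⟨h₁, h₂, hg⟩, hr⟩ => ⟨h₁, h₂, hg, ?_⟩⟩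
  · exact_mod_cast (by rw [hr, Complex.ofReal_add, h₁.ofReal_re hx, h₂.ofReal_re hx] :
      ((((f₁ x).re + (f₂ x).re : ℝ)) : ℂ) = r)
  · rw [← hr, Complex.ofReal_add, h₁.ofReal_re hx, h₂.ofReal_re hx]

lemma bddBelow_range_re_add_re {x : A} (hx : 0 ≤ x) (g : A →L[ℂ] ℂ) :
    BddBelow (Set.range fun p : posDecompositions g => (p.1.1 x).re + (p.1.2 x).re) := by
  refine ⟨0, ?_⟩
  rintro _ ⟨⟨p, h₁, h₂, _⟩, rfl⟩
  exact add_nonneg (h₁.re_nonneg hx) (h₂.re_nonneg hx)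

lemma rSeminorm_le_mul_of_forall {x y : A} (hx : 0 ≤ x) (hy : 0 ≤ y) {K : ℝ} (hK : 0 ≤ K)
    (h : ∀ f : A →L[ℂ] ℂ, IsPosFunctional f → (f x).re ≤ K * (f y).re) (g : A →L[ℂ] ℂ) :
    rSeminorm x g ≤ K * rSeminorm y g := by
  rw [rSeminorm_eq_iInf hx, rSeminorm_eq_iInf hy, Real.mul_iInf_of_nonneg hK]
  exact ciInf_mono (bddBelow_range_re_add_re hx g) fun ⟨p, h₁, h₂, _⟩ => by
    linarith [h _ h₁, h _ h₂]

lemma IsPosFunctional.rSeminorm_eq {f : A →L[ℂ] ℂ} (hf : IsPosFunctional f) {x : A}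
    (hx : 0 ≤ x) : rSeminorm x f = (f x).re := by
  have hf0 : (f, 0) ∈ posDecompositions f := ⟨hf, fun _ _ => le_rfl, (sub_zero f).symm⟩
  have : Nonempty (posDecompositions f) := ⟨⟨_, hf0⟩⟩
  rw [rSeminorm_eq_iInf hx]
  refine le_antisymm ?_ (le_ciInf fun ⟨p, h₁, h₂, hp⟩ => ?_)
  · exact (ciInf_le (bddBelow_range_re_add_re hx f) ⟨_, hf0⟩).trans_eq (by simp)
  · have hfx : (f x).re = (p.1 x).re - (p.2 x).re := by simp [hp]
    linarith [h₂.re_nonneg hx]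

namespace IsPosFunctional

variable {f : A →L[ℂ] ℂ} {a : A}

lemma re_apply_cfc_nonpos_of_le_mul (hf : IsPosFunctional f) {p v : ℝ → ℝ} {k : ℝ}
    (hp : Continuous p) (hv : Continuous v) (hv0 : ∀ t, 0 ≤ v t) (hk : 0 ≤ k)
    (hvp : ∀ t ∈ spectrum ℝ a, v t ≤ k * (v t * p t))
    (hP : ∀ g : A →L[ℂ] ℂ, IsPosFunctional g → (g (cfc p a)).re ≤ 0) :
    (f (cfc v a)).re ≤ 0 := by
  set b := cfc (fun t => √(v t)) a
  have hb : cfc (fun t => v t * p t) a = b * cfc p a * b := by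
    rw [← cfc_mul .., ← cfc_mul ..]
    refine cfc_congr fun t _ => ?_
    rw [mul_right_comm, Real.mul_self_sqrt (hv0 t)]
  calc (f (cfc v a)).re ≤ (f (cfc (fun t => k * (v t * p t)) a)).re := hf.re_mono (cfc_mono hvp)
    _ = k * (f.comp (ContinuousLinearMap.mulLeftRight ℂ A b b) (cfc p a)).re := by
      rw [cfc_const_mul .., hb, ContinuousLinearMap.re_apply_real_smul]; rfl
    _ ≤ 0 := mul_nonpos_of_nonneg_of_nonpos hk (hP _ (hf.comp_mulLeftRight IsSelfAdjoint.cfc))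

lemma re_apply_cfc_le_max_sub_add (hf : IsPosFunctional f) (ha : IsSelfAdjoint a)
    {w : ℝ → ℝ} (hw : Continuous w) (η : ℝ) :
    (f (cfc w a)).re ≤ (f (cfc (fun t => max (w t - η) 0) a)).re + η * (f 1).re := by
  have hle : cfc w a ≤ cfc (fun t => max (w t - η) 0 + η) a :=
    cfc_mono fun t _ => by linarith [le_max_left (w t - η) 0]
  rw [cfc_add_const .., Algebra.algebraMap_eq_smul_one] at hle
  simpa only [map_add, Complex.add_re, f.re_apply_real_smul] using hf.re_mono hle

lemma re_apply_cfc_nonpos (ha : 0 ≤ a) {α β c : ℝ} (hα : 0 < α) (hαβ : α < β) (hc : 0 < c)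
    (hab : ∀ g : A →L[ℂ] ℂ, IsPosFunctional g → c * (g (a ^ α)).re ≤ (g (a ^ β)).re)
    (hf : IsPosFunctional f) {w : ℝ → ℝ} (hw : Continuous w)
    (hwσ : ∀ t ∈ spectrum ℝ a, (t = 0 ∨ c ^ (β - α)⁻¹ ≤ t) → w t ≤ 0) :
    (f (cfc w a)).re ≤ 0 := by
  have hα_cont := Real.continuous_rpow_const hα.le
  have hβ_cont := Real.continuous_rpow_const (hα.trans hαβ).le
  set p : ℝ → ℝ := fun t => c * t ^ α - t ^ β
  have hp : Continuous p := by fun_prop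
  have hP (g : A →L[ℂ] ℂ) (hg : IsPosFunctional g) : (g (cfc p a)).re ≤ 0 := by
    rw [cfc_sub .., cfc_const_mul .., ← CFC.rpow_eq_cfc_real ha, ← CFC.rpow_eq_cfc_real ha,
      map_sub, Complex.sub_re, g.re_apply_real_smul]
    linarith [hab g hg]
  have h1 := hf.re_nonneg (zero_le_one' A)
  refine le_of_forall_pos_le_add fun δ hδ => ?_
  set η := δ / ((f 1).re + 1)
  have hη : 0 < η := by positivity
  -- `p` vanishes at `0`, so `w` is truncated at height `η` to keep away from `0`.
  set S := spectrum ℝ a ∩ {t | η ≤ w t}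
  have hpS : ∀ t ∈ S, 0 < p t := fun t ⟨ht, (hηt : η ≤ w t)⟩ => by
    have hwt : ¬ w t ≤ 0 := by linarith
    refine sub_pos.mpr (Real.rpow_lt_mul_rpow_of_lt hαβ hc ?_ ?_)
    · exact (spectrum_nonneg_of_nonneg ha ht).lt_of_ne' fun h0 => hwt (hwσ t ht (.inl h0))
    · exact not_le.mp fun hεt => hwt (hwσ t ht (.inr hεt))
  obtain ⟨K, hK, hKS⟩ := ((spectrum.isCompact a).inter_right (isClosed_le continuous_const hw)
    ).exists_pos_le_mul (φ := fun _ => 1) continuousOn_const hp.continuousOn hpS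
  have hv : (f (cfc (fun t => max (w t - η) 0) a)).re ≤ 0 := by
    refine hf.re_apply_cfc_nonpos_of_le_mul hp (by fun_prop) (fun t => le_max_right _ _) hK.le
      (fun t ht => ?_) hP
    by_cases hηt : η ≤ w t
    · have := hKS t ⟨ht, hηt⟩
      nlinarith [le_max_right (w t - η) 0]
    · simp [max_eq_right (by linarith : w t - η ≤ 0)]
  have hηf : η * (f 1).re ≤ δ := by
    rw [div_mul_eq_mul_div, div_le_iff₀ (by positivity)]
    nlinarith
  linarith [hf.re_apply_cfc_le_max_sub_add ha.isSelfAdjoint hw η]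

lemma re_apply_cfc_le_mul (ha : 0 ≤ a) {α β c : ℝ}
    (hα : 0 < α) (hαβ : α < β) (hc : 0 < c)
    (hab : ∀ g : A →L[ℂ] ℂ, IsPosFunctional g → c * (g (a ^ α)).re ≤ (g (a ^ β)).re)
    (hf : IsPosFunctional f) {φ ψ : ℝ → ℝ} (hφ : Continuous φ) (hψ : Continuous ψ) {K : ℝ}
    (hφψ : ∀ t ∈ spectrum ℝ a, (t = 0 ∨ c ^ (β - α)⁻¹ ≤ t) → φ t ≤ K * ψ t) :
    (f (cfc φ a)).re ≤ K * (f (cfc ψ a)).re := by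
  have := hf.re_apply_cfc_nonpos ha hα hαβ hc hab (w := fun t => φ t - K * ψ t) (by fun_prop)
    fun t ht h => sub_nonpos.mpr (hφψ t ht h)
  rw [cfc_sub .., cfc_const_mul .., map_sub, Complex.sub_re, f.re_apply_real_smul] at this
  linarith

end IsPosFunctional

lemma exists_rSeminorm_cfc_le_mul {a : A} (ha : 0 ≤ a) {α β c : ℝ}
    (hα : 0 < α) (hαβ : α < β) (hc : 0 < c)
    (hab : ∀ g : A →L[ℂ] ℂ, IsPosFunctional g → c * (g (a ^ α)).re ≤ (g (a ^ β)).re)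
    {φ ψ : ℝ → ℝ} (hφ : Continuous φ) (hψ : Continuous ψ) (hφ0 : φ 0 = 0)
    (hφσ : ∀ t ∈ spectrum ℝ a, 0 ≤ φ t) (hψσ : ∀ t ∈ spectrum ℝ a, 0 ≤ ψ t)
    (hψpos : ∀ t, 0 < t → 0 < ψ t) :
    ∃ K > 0, ∀ g : A →L[ℂ] ℂ, rSeminorm (cfc φ a) g ≤ K * rSeminorm (cfc ψ a) g := by
  have hε : 0 < c ^ (β - α)⁻¹ := Real.rpow_pos_of_pos hc _
  obtain ⟨K, hK, hKS⟩ := ((spectrum.isCompact a).inter_right isClosed_Ici).exists_pos_le_mul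
    hφ.continuousOn hψ.continuousOn fun t ht => hψpos t (hε.trans_le ht.2)
  refine ⟨K, hK, rSeminorm_le_mul_of_forall (cfc_nonneg hφσ) (cfc_nonneg hψσ) hK.le
    fun f hf => hf.re_apply_cfc_le_mul ha hα hαβ hc hab hφ hψ fun t ht h => ?_⟩
  rcases h with rfl | hεt
  · simpa [hφ0] using mul_nonneg hK.le (hψσ 0 ht)
  · exact hKS t ⟨ht, hεt⟩

theorem rSeminorm_rpow_equiv_general (a : A) (ha : 0 ≤ a) (α β : ℝ) (hα : 0 < α) (hαβ : α < β)
    (c C : ℝ) (hc : 0 < c)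
    (h : ∀ f : A →L[ℂ] ℂ, IsHermitianFunctional f →
      c * rSeminorm (a ^ α) f ≤ rSeminorm (a ^ β) f ∧
        rSeminorm (a ^ β) f ≤ C * rSeminorm (a ^ α) f) :
    ∀ γ : ℝ, 0 < γ → ∃ c' C' : ℝ, 0 < c' ∧ 0 < C' ∧
      ∀ f : A →L[ℂ] ℂ, IsHermitianFunctional f →
        c' * rSeminorm a f ≤ rSeminorm (a ^ γ) f ∧
          rSeminorm (a ^ γ) f ≤ C' * rSeminorm a f := by
  intro γ hγ
  have hab (g : A →L[ℂ] ℂ) (hg : IsPosFunctional g) : c * (g (a ^ α)).re ≤ (g (a ^ β)).re := by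
    simpa only [hg.rSeminorm_eq CFC.rpow_nonneg] using (h g hg.isHermitian).1
  have hrpow : Continuous fun t : ℝ => t ^ γ := Real.continuous_rpow_const hγ.le
  have hrpow_nonneg (t : ℝ) (ht : t ∈ spectrum ℝ a) : 0 ≤ t ^ γ :=
    Real.rpow_nonneg (spectrum_nonneg_of_nonneg ha ht) γ
  obtain ⟨C', hC', hle⟩ := exists_rSeminorm_cfc_le_mul ha hα hαβ hc hab hrpow continuous_id
    (Real.zero_rpow hγ.ne') hrpow_nonneg (fun t ht => spectrum_nonneg_of_nonneg ha ht)
    fun t ht => ht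
  obtain ⟨K, hK, hge⟩ := exists_rSeminorm_cfc_le_mul ha hα hαβ hc hab continuous_id hrpow rfl
    (fun t ht => spectrum_nonneg_of_nonneg ha ht) hrpow_nonneg
    fun t ht => Real.rpow_pos_of_pos ht γ
  rw [← CFC.rpow_eq_cfc_real ha, cfc_id ℝ a] at hle hge
  refine ⟨K⁻¹, C', inv_pos.mpr hK, hC', fun f _ => ⟨?_, hle f⟩⟩
  rw [inv_mul_le_iff₀ hK]
  exact hge f

/-- If `r_{a^α}` and `r_{a^β}` are equivalent for some `0 < α < β`, then `r_{a^γ}` is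
equivalent to `r_a` for every `γ > 0`. -/
theorem rSeminorm_rpow_equiv (a : A) (ha : 0 ≤ a) (α β : ℝ) (hα : 0 < α) (hαβ : α < β)
    (c C : ℝ) (hc : 0 < c) (hC : 0 < C)
    (h : ∀ f : A →L[ℂ] ℂ, IsHermitianFunctional f →
      c * rSeminorm (a ^ α) f ≤ rSeminorm (a ^ β) f ∧
        rSeminorm (a ^ β) f ≤ C * rSeminorm (a ^ α) f) :
    ∀ γ : ℝ, 0 < γ → ∃ c' C' : ℝ, 0 < c' ∧ 0 < C' ∧
      ∀ f : A →L[ℂ] ℂ, IsHermitianFunctional f →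
        c' * rSeminorm a f ≤ rSeminorm (a ^ γ) f ∧
          rSeminorm (a ^ γ) f ≤ C' * rSeminorm a f :=
  rSeminorm_rpow_equiv_general a ha α β hα hαβ c C hc h
end

section
/- Let A be a unital C*-algebra and a ∈ A a positive element. Then a is invertible in A if and only if the seminorm r_a is equivalent to the dual norm on hermitian continuous linear functionals, i.e. there exist constants c, C > 0 such that c · ‖f‖ ≤ r_a(f) ≤ C · ‖f‖ for every hermitian continuous linear functional f on A. -/
/-!
If `a` is invertible, then `ε ≤ a ≤ ‖a‖` for some `ε > 0`, so every positive functional `g`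
satisfies `ε g(1) ≤ g(a) ≤ ‖a‖ g(1)`, while `‖g‖` is comparable to `g(1)`. Hence `r_a(f)` is
comparable to `‖f‖` as soon as every hermitian `f` has a Jordan decomposition `f = f₁ - f₂` with
`f₁(1) + f₂(1) ≤ 3 ‖f‖`; this decomposition comes from the M. Riesz extension theorem applied to a
cone in `A × ℝ` built from `Re f`.

If `a` is not invertible, no element of the line `ℂ a` lies within distance `1` of `1`, since
non-units stay outside the unit ball around `1`. Hahn–Banach then gives `F` with `‖F‖ ≤ 1`,
`F(1) = 1` and `F(a) = 0`. Such an `F` is positive: the C*-identity gives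
`‖x + it‖² ≤ ‖x‖² + t²` for self-adjoint `x`, which forces `F x` to be real, and then
`‖‖x‖ - x‖ ≤ ‖x‖` forces `F x ≥ 0` for `x ≥ 0`. So `F = F - 0` gives `r_a(F) = 0` although
`‖F‖ = 1`.
-/

open scoped ComplexOrder NNReal

variable {A : Type*} [CStarAlgebra A] [PartialOrder A] [StarOrderedRing A]

open ComplexStarModule Metric

lemma CStarRing.norm_one_le_one {E : Type*} [NormedRing E] [StarRing E] [CStarRing E] :
    ‖(1 : E)‖ ≤ 1 := by
  rcases subsingleton_or_nontrivial E with _ | _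
  · simp [Subsingleton.elim (1 : E) 0]
  · exact CStarRing.norm_one.le

lemma Complex.add_eq_ofReal_norm_add_norm {z w : ℂ} (hz : 0 ≤ z) (hw : 0 ≤ w) :
    z + w = ((‖z‖ + ‖w‖ : ℝ) : ℂ) := by
  rw [Complex.ofReal_add, ← Complex.eq_coe_norm_of_nonneg hz, ← Complex.eq_coe_norm_of_nonneg hw]

theorem exists_norm_le_one_apply_eq_infDist {𝕜 E : Type*} [RCLike 𝕜] [SeminormedAddCommGroup E]
    [NormedSpace 𝕜 E] (p : Submodule 𝕜 E) (x : E) :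
    ∃ g : StrongDual 𝕜 E, ‖g‖ ≤ 1 ∧ (∀ y ∈ p, g y = 0) ∧ g x = infDist x p := by
  obtain ⟨h, hh, hhx⟩ := exists_dual_vector'' 𝕜 (p.mkQ x)
  have hmkQ : ‖p.mkQL‖ ≤ 1 :=
    p.mkQL.opNorm_le_bound zero_le_one fun y => by simpa using Submodule.Quotient.norm_mk_le p y
  refine ⟨h.comp p.mkQL, ?_, fun y hy => ?_, ?_⟩
  · exact (h.opNorm_comp_le _).trans (mul_le_one₀ hh (norm_nonneg _) hmkQ)
  · simp [(Submodule.Quotient.mk_eq_zero p).2 hy]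
  · rw [ContinuousLinearMap.comp_apply, Submodule.mkQL_apply, hhx]
    exact congrArg _ (QuotientAddGroup.norm_mk (S := p.toAddSubgroup) x)

lemma one_le_infDist_one_span_singleton {𝕜 R : Type*} [NormedField 𝕜] [NormedRing R]
    [NormedAlgebra 𝕜 R] [CompleteSpace R] {a : R} (ha : ¬IsUnit a) :
    1 ≤ infDist (1 : R) (𝕜 ∙ a) := by
  refine (le_infDist ⟨0, (𝕜 ∙ a).zero_mem⟩).2 fun y hy => ?_
  obtain ⟨β, rfl⟩ := Submodule.mem_span_singleton.1 hy
  have hβa : β • a ∈ nonunits R := by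
    rintro hu
    rcases eq_or_ne β 0 with rfl | hβ
    · rw [zero_smul, isUnit_zero_iff] at hu
      have := subsingleton_of_zero_eq_one hu
      exact ha (isUnit_of_subsingleton a)
    · exact ha ((isUnit_smul_iff (Units.mk0 β hβ) a).1 hu)
  simpa [dist_comm] using nonunits.subset_compl_ball hβa

lemma apply_algebraMap_real {A : Type*} [CStarAlgebra A] (f : A →L[ℂ] ℂ) (r : ℝ) :
    f (algebraMap ℝ A r) = r * f 1 := by
  rw [Algebra.algebraMap_eq_smul_one, f.map_smul_of_tower, Complex.real_smul]

namespace IsPosFunctional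

variable {f : A →L[ℂ] ℂ}

lemma zero : IsPosFunctional (0 : A →L[ℂ] ℂ) := fun _ _ => le_rfl

lemma mono (hf : IsPosFunctional f) {x y : A} (h : x ≤ y) : f x ≤ f y := by
  simpa using hf _ (sub_nonneg.2 h)

lemma norm_apply_le (hf : IsPosFunctional f) {x : A} (hx : 0 ≤ x) : ‖f x‖ ≤ ‖f 1‖ * ‖x‖ :=
  (PositiveLinearMap.mk₀ (f : A →ₗ[ℂ] ℂ) hf).norm_apply_le_of_nonneg x hx

lemma opNorm_le (hf : IsPosFunctional f) : ‖f‖ ≤ 4 * ‖f 1‖ := by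
  refine f.opNorm_le_bound (by positivity) fun x => ?_
  obtain ⟨y, hy_nonneg, hy_norm, hxy⟩ := CStarAlgebra.exists_sum_four_nonneg x
  calc ‖f x‖ ≤ ∑ i : Fin 4, ‖f (y i)‖ := by
        rw [hxy, map_sum]
        refine (norm_sum_le _ _).trans_eq (Finset.sum_congr rfl fun i _ => ?_)
        simp
    _ ≤ ∑ _i : Fin 4, ‖f 1‖ * ‖x‖ := by
        gcongr with i
        exact (hf.norm_apply_le (hy_nonneg i)).trans (by gcongr; exact hy_norm i)
    _ = 4 * ‖f 1‖ * ‖x‖ := by simp [mul_assoc]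

lemma mul_norm_apply_one_le (hf : IsPosFunctional f) {r : ℝ} (hr : 0 ≤ r) {x : A}
    (hx : algebraMap ℝ A r ≤ x) : r * ‖f 1‖ ≤ ‖f x‖ := by
  have h := hf.mono hx
  rw [apply_algebraMap_real] at h
  have h0 : 0 ≤ (r : ℂ) * f 1 := mul_nonneg (by exact_mod_cast hr) (hf 1 zero_le_one)
  simpa [abs_of_nonneg hr] using CStarAlgebra.norm_le_norm_of_nonneg_of_le h0 h

end IsPosFunctional

lemma IsHermitianFunctional.ofReal_re_apply {A : Type*} [CStarAlgebra A] {f : A →L[ℂ] ℂ}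
    (hf : IsHermitianFunctional f) {x : A} (hx : IsSelfAdjoint x) : ((f x).re : ℂ) = f x :=
  Complex.conj_eq_iff_re.mp (by rw [← hf, hx.star_eq])

/-- A linear `G` with `G (0, 1) = 1` is nonnegative on this cone iff `g x := -G (x, 0)` satisfies
`g ≤ C ‖ℜ ·‖` and dominates both `φ` and `0` on positive elements. -/
def jordanCone (φ : A →ₗ[ℝ] ℝ) (C : ℝ≥0) : PointedCone ℝ (A × ℝ) where
  carrier := {p | ∃ u v : A, 0 ≤ u ∧ 0 ≤ v ∧ C * ‖(ℜ p.1 : A) + u + v‖ - φ u ≤ p.2}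
  zero_mem' := ⟨0, 0, le_rfl, le_rfl, by simp⟩
  add_mem' := by
    rintro ⟨x₁, t₁⟩ ⟨x₂, t₂⟩ ⟨u₁, v₁, hu₁, hv₁, h₁⟩ ⟨u₂, v₂, hu₂, hv₂, h₂⟩
    refine ⟨u₁ + u₂, v₁ + v₂, add_nonneg hu₁ hu₂, add_nonneg hv₁ hv₂, ?_⟩
    have hsum : (ℜ (x₁ + x₂) : A) + (u₁ + u₂) + (v₁ + v₂) =
        ((ℜ x₁ : A) + u₁ + v₁) + ((ℜ x₂ : A) + u₂ + v₂) := by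
      rw [map_add, AddSubgroup.coe_add]; abel
    calc C * ‖(ℜ (x₁ + x₂) : A) + (u₁ + u₂) + (v₁ + v₂)‖ - φ (u₁ + u₂)
        ≤ C * (‖(ℜ x₁ : A) + u₁ + v₁‖ + ‖(ℜ x₂ : A) + u₂ + v₂‖) - (φ u₁ + φ u₂) := by
          rw [hsum, map_add]; gcongr; exact norm_add_le _ _
      _ ≤ t₁ + t₂ := by dsimp only at h₁ h₂; linarith
  smul_mem' := by
    rintro ⟨c, hc⟩ ⟨x, t⟩ ⟨u, v, hu, hv, h⟩
    refine ⟨c • u, c • v, smul_nonneg hc hu, smul_nonneg hc hv, ?_⟩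
    have hsmul : (ℜ (c • x) : A) + c • u + c • v = c • ((ℜ x : A) + u + v) := by
      simp only [map_smul, selfAdjoint.val_smul, smul_add]
    show C * ‖(ℜ (c • x) : A) + c • u + c • v‖ - φ (c • u) ≤ c * t
    rw [hsmul, norm_smul, Real.norm_of_nonneg hc, map_smul, smul_eq_mul]
    have := mul_le_mul_of_nonneg_left h hc
    dsimp only at this
    linarith

lemma nonneg_of_mk_zero_mem_jordanCone {φ : A →ₗ[ℝ] ℝ} {C : ℝ≥0}
    (hφ : ∀ u, 0 ≤ u → φ u ≤ C * ‖u‖) {t : ℝ} (ht : ((0 : A), t) ∈ jordanCone φ C) : 0 ≤ t := by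
  obtain ⟨u, v, hu, hv, h⟩ := ht
  have huv : ‖u‖ ≤ ‖u + v‖ :=
    CStarAlgebra.norm_le_norm_of_nonneg_of_le hu (le_add_of_nonneg_right hv)
  simp only [map_zero, ZeroMemClass.coe_zero, zero_add] at h
  calc 0 ≤ C * ‖u + v‖ - C * ‖u‖ := sub_nonneg.2 (mul_le_mul_of_nonneg_left huv C.coe_nonneg)
    _ ≤ C * ‖u + v‖ - φ u := by gcongr; exact hφ u hu
    _ ≤ t := h

theorem exists_nonneg_dominating_le_norm_realPart (φ : A →ₗ[ℝ] ℝ) (C : ℝ≥0)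
    (hφ : ∀ u, 0 ≤ u → φ u ≤ C * ‖u‖) :
    ∃ g : A →ₗ[ℝ] ℝ, (∀ x, g x ≤ C * ‖(ℜ x : A)‖) ∧ ∀ u, 0 ≤ u → φ u ≤ g u ∧ 0 ≤ g u := by
  let e : A × ℝ →ₗ.[ℝ] ℝ :=
    ⟨LinearMap.range (LinearMap.inr ℝ A ℝ), (LinearMap.snd ℝ A ℝ).domRestrict _⟩
  have nonneg (p : e.domain) (hp : (p : A × ℝ) ∈ jordanCone φ C) : 0 ≤ e p := by
    obtain ⟨_, t, rfl⟩ := p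
    exact nonneg_of_mk_zero_mem_jordanCone hφ hp
  have dense (p : A × ℝ) : ∃ q : e.domain, (q : A × ℝ) + p ∈ jordanCone φ C :=
    ⟨⟨(0, C * ‖(ℜ p.1 : A)‖ - p.2), _, rfl⟩, 0, 0, le_rfl, le_rfl, by simp⟩
  obtain ⟨G, hGe, hG⟩ := riesz_extension (jordanCone φ C) e nonneg dense
  have hG_apply (x : A) (t : ℝ) : G (x, t) = G (x, 0) + t := by
    have hG1 : G (0, 1) = 1 := hGe ⟨(0, 1), 1, rfl⟩
    rw [show ((x, t) : A × ℝ) = (x, 0) + t • (0, 1) by simp, map_add, map_smul, hG1,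
      smul_eq_mul, mul_one]
  have hG_neg (u : A) (t : ℝ) : G (-u, t) = -G (u, 0) + t := by
    rw [hG_apply, show ((-u, 0) : A × ℝ) = -(u, 0) by simp, map_neg]
  refine ⟨-(G ∘ₗ LinearMap.inl ℝ A ℝ), fun x => ?_, fun u hu => ⟨?_, ?_⟩⟩ <;>
    simp only [LinearMap.neg_apply, LinearMap.comp_apply, LinearMap.inl_apply]
  · have := hG (x, C * ‖(ℜ x : A)‖) ⟨0, 0, le_rfl, le_rfl, by simp⟩
    linarith [hG_apply x (C * ‖(ℜ x : A)‖)]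
  · have := hG (-u, -φ u) ⟨u, 0, hu, le_rfl, by simp [(IsSelfAdjoint.of_nonneg hu).coe_realPart]⟩
    linarith [hG_neg u (-φ u)]
  · have := hG (-u, 0) ⟨0, u, le_rfl, hu, by simp [(IsSelfAdjoint.of_nonneg hu).coe_realPart]⟩
    linarith [hG_neg u 0]

theorem exists_apply_eq_of_le_norm_realPart {A : Type*} [CStarAlgebra A] (g : A →ₗ[ℝ] ℝ) (C : ℝ≥0)
    (hg : ∀ x, g x ≤ C * ‖(ℜ x : A)‖) :
    ∃ f : A →L[ℂ] ℂ, ∀ x, IsSelfAdjoint x → f x = g x := by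
  have hbound (x : A) : ‖g x‖ ≤ C * ‖x‖ := by
    have h₁ := hg x
    have h₂ := hg (-x)
    rw [map_neg, map_neg, NegMemClass.coe_neg, norm_neg] at h₂
    have := mul_le_mul_of_nonneg_left (show ‖(ℜ x : A)‖ ≤ ‖x‖ from realPart.norm_le x) C.coe_nonneg
    rw [Real.norm_eq_abs, abs_le]
    constructor <;> linarith
  have hI (x : A) (hx : IsSelfAdjoint x) : g (Complex.I • x) = 0 := by
    have hre : (ℜ (Complex.I • x) : A) = 0 := by
      rw [realPart_I_smul, imaginaryPart_eq_zero_iff.2 hx, neg_zero, ZeroMemClass.coe_zero]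
    have h₁ := hg (Complex.I • x)
    have h₂ := hg (-(Complex.I • x))
    rw [map_neg, map_neg, NegMemClass.coe_neg, hre, neg_zero, norm_zero, mul_zero] at h₂
    rw [hre, norm_zero, mul_zero] at h₁
    linarith
  refine ⟨StrongDual.extendRCLike (g.mkContinuous C hbound), fun x hx => ?_⟩
  rw [StrongDual.extendRCLike_apply, LinearMap.mkContinuous_apply, LinearMap.mkContinuous_apply]
  simp [hI x hx]

theorem IsHermitianFunctional.exists_isPosFunctional_sub {f : A →L[ℂ] ℂ}
    (hf : IsHermitianFunctional f) :
    ∃ f₁ f₂ : A →L[ℂ] ℂ, IsPosFunctional f₁ ∧ IsPosFunctional f₂ ∧ f = f₁ - f₂ ∧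
      ‖f₁ 1‖ + ‖f₂ 1‖ ≤ 3 * ‖f‖ := by
  obtain ⟨g, hg_le, hg_ge⟩ := exists_nonneg_dominating_le_norm_realPart
    (Complex.reLm ∘ₗ (f : A →ₗ[ℂ] ℂ).restrictScalars ℝ) ‖f‖₊
    fun u _ => (Complex.re_le_norm _).trans (f.le_opNorm u)
  obtain ⟨f₁, hf₁⟩ := exists_apply_eq_of_le_norm_realPart g ‖f‖₊ hg_le
  have hf₁_one : ‖f₁ 1‖ ≤ ‖f‖ := by
    rw [hf₁ 1 (.one A), Complex.norm_real, Real.norm_of_nonneg (hg_ge 1 zero_le_one).2]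
    calc g 1 ≤ ‖f‖ * ‖(ℜ (1 : A) : A)‖ := hg_le 1
      _ ≤ ‖f‖ := by
        rw [(IsSelfAdjoint.one A).coe_realPart]
        exact mul_le_of_le_one_right (norm_nonneg _) CStarRing.norm_one_le_one
  refine ⟨f₁, f₁ - f, fun u hu => ?_, fun u hu => ?_, (sub_sub_cancel _ _).symm, ?_⟩
  · rw [hf₁ u (.of_nonneg hu)]
    exact_mod_cast (hg_ge u hu).2
  · rw [sub_apply, hf₁ u (.of_nonneg hu), ← hf.ofReal_re_apply (.of_nonneg hu),
      ← Complex.ofReal_sub, Complex.zero_le_real, sub_nonneg]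
    exact (hg_ge u hu).1
  · calc ‖f₁ 1‖ + ‖(f₁ - f) 1‖ ≤ ‖f₁ 1‖ + (‖f₁ 1‖ + ‖f 1‖) := by gcongr; exact norm_sub_le _ _
      _ ≤ 3 * ‖f‖ := by linarith [f.unit_le_opNorm 1 CStarRing.norm_one_le_one]

section rSeminorm

variable {a : A} {f : A →L[ℂ] ℂ}

lemma rSeminorm_eq (ha : 0 ≤ a) :
    rSeminorm a f = sInf {r : ℝ | ∃ f₁ f₂ : A →L[ℂ] ℂ, IsPosFunctional f₁ ∧ IsPosFunctional f₂ ∧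
      f = f₁ - f₂ ∧ r = ‖f₁ a‖ + ‖f₂ a‖} := by
  refine congrArg sInf (Set.ext fun r => exists₂_congr fun f₁ f₂ => ?_)
  refine ⟨fun ⟨h₁, h₂, hf, hr⟩ => ⟨h₁, h₂, hf, ?_⟩, fun ⟨h₁, h₂, hf, hr⟩ => ⟨h₁, h₂, hf, ?_⟩⟩
  · rwa [Complex.add_eq_ofReal_norm_add_norm (h₁ a ha) (h₂ a ha), Complex.ofReal_inj] at hr
  · rw [Complex.add_eq_ofReal_norm_add_norm (h₁ a ha) (h₂ a ha), hr]

lemma rSeminorm_le (ha : 0 ≤ a) {f₁ f₂ : A →L[ℂ] ℂ} (h₁ : IsPosFunctional f₁)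
    (h₂ : IsPosFunctional f₂) (hf : f = f₁ - f₂) : rSeminorm a f ≤ ‖f₁ a‖ + ‖f₂ a‖ := by
  rw [rSeminorm_eq ha]
  refine csInf_le ⟨0, ?_⟩ ⟨f₁, f₂, h₁, h₂, hf, rfl⟩
  rintro _ ⟨g₁, g₂, -, -, -, rfl⟩
  positivity

lemma le_rSeminorm (ha : 0 ≤ a) (hf : IsHermitianFunctional f) {b : ℝ}
    (hb : ∀ f₁ f₂ : A →L[ℂ] ℂ, IsPosFunctional f₁ → IsPosFunctional f₂ → f = f₁ - f₂ →
      b ≤ ‖f₁ a‖ + ‖f₂ a‖) :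
    b ≤ rSeminorm a f := by
  obtain ⟨f₁, f₂, h₁, h₂, hf₁₂, -⟩ := hf.exists_isPosFunctional_sub
  rw [rSeminorm_eq ha]
  refine le_csInf ⟨_, f₁, f₂, h₁, h₂, hf₁₂, rfl⟩ ?_
  rintro _ ⟨g₁, g₂, hg₁, hg₂, hfg, rfl⟩
  exact hb g₁ g₂ hg₁ hg₂ hfg

lemma rSeminorm_le_mul_norm (ha : 0 ≤ a) (hf : IsHermitianFunctional f) :
    rSeminorm a f ≤ 3 * ‖a‖ * ‖f‖ := by
  obtain ⟨f₁, f₂, h₁, h₂, hf₁₂, hbound⟩ := hf.exists_isPosFunctional_sub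
  calc rSeminorm a f ≤ ‖f₁ a‖ + ‖f₂ a‖ := rSeminorm_le ha h₁ h₂ hf₁₂
    _ ≤ ‖f₁ 1‖ * ‖a‖ + ‖f₂ 1‖ * ‖a‖ := add_le_add (h₁.norm_apply_le ha) (h₂.norm_apply_le ha)
    _ ≤ 3 * ‖a‖ * ‖f‖ := by nlinarith [norm_nonneg a]

lemma mul_norm_le_rSeminorm (ha : 0 ≤ a) {ε : ℝ} (hε : 0 ≤ ε) (hεa : algebraMap ℝ A ε ≤ a)
    (hf : IsHermitianFunctional f) : ε / 4 * ‖f‖ ≤ rSeminorm a f := by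
  refine le_rSeminorm ha hf fun f₁ f₂ h₁ h₂ hf₁₂ => ?_
  calc ε / 4 * ‖f‖ ≤ ε / 4 * (‖f₁‖ + ‖f₂‖) := by gcongr; rw [hf₁₂]; exact norm_sub_le _ _
    _ ≤ ε * ‖f₁ 1‖ + ε * ‖f₂ 1‖ := by nlinarith [h₁.opNorm_le, h₂.opNorm_le]
    _ ≤ ‖f₁ a‖ + ‖f₂ a‖ :=
      add_le_add (h₁.mul_norm_apply_one_le hε hεa) (h₂.mul_norm_apply_one_le hε hεa)

end rSeminorm

lemma IsSelfAdjoint.sq_norm_add_I_smul_one_le {A : Type*} [CStarAlgebra A] {x : A}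
    (hx : IsSelfAdjoint x) (t : ℝ) :
    ‖x + (t * Complex.I) • (1 : A)‖ ^ 2 ≤ ‖x‖ ^ 2 + t ^ 2 := by
  have h : star (x + (t * Complex.I) • (1 : A)) * (x + (t * Complex.I) • 1) =
      x * x + ((t ^ 2 : ℝ) : ℂ) • 1 := by
    have hc : (t * Complex.I) * (t * -Complex.I) = ((t ^ 2 : ℝ) : ℂ) := by
      push_cast; ring_nf; rw [Complex.I_sq]; ring
    rw [star_add, star_smul, hx.star_eq, star_one, Complex.star_def, map_mul, Complex.conj_ofReal,
      Complex.conj_I]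
    simp only [add_mul, mul_add, smul_add, smul_mul_assoc, mul_smul_comm, one_mul, mul_one,
      smul_smul, hc]
    module
  rw [sq, ← CStarRing.norm_star_mul_self, h]
  calc ‖x * x + ((t ^ 2 : ℝ) : ℂ) • (1 : A)‖ ≤ ‖x‖ * ‖x‖ + t ^ 2 * ‖(1 : A)‖ := by
        refine (norm_add_le _ _).trans (add_le_add (norm_mul_le _ _) ?_)
        rw [norm_smul, Complex.norm_real, Real.norm_of_nonneg (sq_nonneg t)]
    _ ≤ ‖x‖ ^ 2 + t ^ 2 := by
        nlinarith [CStarRing.norm_one_le_one (E := A), sq_nonneg t]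

lemma im_apply_eq_zero_of_norm_le_one {A : Type*} [CStarAlgebra A] {F : A →L[ℂ] ℂ}
    (hF : ‖F‖ ≤ 1) (hF1 : F 1 = 1) {x : A} (hx : IsSelfAdjoint x) : (F x).im = 0 := by
  have key (t : ℝ) : (F x).re ^ 2 + ((F x).im + t) ^ 2 ≤ ‖x‖ ^ 2 + t ^ 2 := by
    have hFt : F (x + (t * Complex.I) • 1) = ⟨(F x).re, (F x).im + t⟩ := by
      apply Complex.ext <;> simp [hF1]
    calc (F x).re ^ 2 + ((F x).im + t) ^ 2 = ‖F (x + (t * Complex.I) • 1)‖ ^ 2 := by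
          rw [hFt, Complex.sq_norm, Complex.normSq_mk]; ring
      _ ≤ ‖x + (t * Complex.I) • (1 : A)‖ ^ 2 := by
          gcongr
          exact (F.le_opNorm _).trans (mul_le_of_le_one_left (norm_nonneg _) hF)
      _ ≤ ‖x‖ ^ 2 + t ^ 2 := hx.sq_norm_add_I_smul_one_le t
  by_contra hβ
  -- `key` says `re² + im² + 2 im t ≤ ‖x‖²` for every real `t`
  have := key ((‖x‖ ^ 2 + 1) / (2 * (F x).im))
  have h2 : 2 * (F x).im * ((‖x‖ ^ 2 + 1) / (2 * (F x).im)) = ‖x‖ ^ 2 + 1 := by field_simp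
  nlinarith [sq_nonneg (F x).re, sq_nonneg (F x).im]

lemma isHermitianFunctional_of_im_eq_zero {A : Type*} [CStarAlgebra A] {f : A →L[ℂ] ℂ}
    (h : ∀ x, IsSelfAdjoint x → (f x).im = 0) : IsHermitianFunctional f := by
  intro x
  have hre := h _ (ℜ x).2
  have him := h _ (ℑ x).2
  rw [← realPart_add_I_smul_imaginaryPart x]
  simp only [star_add, star_smul, (ℜ x).2.star_eq, (ℑ x).2.star_eq, map_add, map_smul, smul_eq_mul]
  apply Complex.ext <;> simp [hre, him]

lemma isHermitianFunctional_of_norm_le_one {A : Type*} [CStarAlgebra A] {F : A →L[ℂ] ℂ}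
    (hF : ‖F‖ ≤ 1) (hF1 : F 1 = 1) : IsHermitianFunctional F :=
  isHermitianFunctional_of_im_eq_zero fun _ hx => im_apply_eq_zero_of_norm_le_one hF hF1 hx

lemma isPosFunctional_of_norm_le_one {F : A →L[ℂ] ℂ} (hF : ‖F‖ ≤ 1) (hF1 : F 1 = 1) :
    IsPosFunctional F := by
  intro x hx
  have hre : ((F x).re : ℂ) = F x :=
    Complex.ext rfl (by simp [im_apply_eq_zero_of_norm_le_one hF hF1 (.of_nonneg hx)])
  have hsub : 0 ≤ algebraMap ℝ A ‖x‖ - x :=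
    sub_nonneg.2 (IsSelfAdjoint.of_nonneg hx).le_algebraMap_norm_self
  have hb : ‖F (algebraMap ℝ A ‖x‖ - x)‖ ≤ ‖x‖ :=
    (F.le_opNorm _).trans <| (mul_le_of_le_one_left (norm_nonneg _) hF).trans <|
      (CStarAlgebra.norm_le_iff_le_algebraMap _ (norm_nonneg x) hsub).2 (sub_le_self _ hx)
  rw [map_sub, apply_algebraMap_real, hF1, mul_one, ← hre, ← Complex.ofReal_sub,
    Complex.norm_real, Real.norm_eq_abs, abs_le] at hb
  rw [← hre, Complex.zero_le_real]
  linarith [hb.2]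

lemma exists_state_apply_eq_zero {A : Type*} [CStarAlgebra A] {a : A} (ha : ¬IsUnit a) :
    ∃ F : A →L[ℂ] ℂ, ‖F‖ ≤ 1 ∧ F 1 = 1 ∧ F a = 0 := by
  obtain ⟨F, hF, hFa, hF1⟩ := exists_norm_le_one_apply_eq_infDist (ℂ ∙ a) (1 : A)
  have hd : infDist (1 : A) (ℂ ∙ a) = 1 := by
    refine le_antisymm ((infDist_le_dist_of_mem (ℂ ∙ a).zero_mem).trans ?_)
      (one_le_infDist_one_span_singleton ha)
    simpa using CStarRing.norm_one_le_one (E := A)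
  exact ⟨F, hF, by simp [hF1, hd], hFa a (Submodule.mem_span_singleton_self a)⟩

lemma exists_pos_algebraMap_le_of_isUnit {a : A} (ha : 0 ≤ a) (hu : IsUnit a) :
    ∃ ε > 0, algebraMap ℝ A ε ≤ a := by
  rcases subsingleton_or_nontrivial A with _ | _
  · exact ⟨1, one_pos, (Subsingleton.elim _ _).le⟩
  · have hpos : IsStrictlyPositive a := ⟨ha, hu⟩
    exact (CFC.exists_pos_algebraMap_le_iff hpos.isSelfAdjoint).2 fun _ hx => hpos.spectrum_pos hx

/-- A positive element `a` is invertible iff `r_a` is equivalent to the dual norm on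
hermitian continuous linear functionals. -/
theorem isUnit_iff_rSeminorm_equiv_norm (a : A) (ha : 0 ≤ a) :
    IsUnit a ↔ ∃ c C : ℝ, 0 < c ∧ 0 < C ∧
      ∀ f : A →L[ℂ] ℂ, IsHermitianFunctional f →
        c * ‖f‖ ≤ rSeminorm a f ∧ rSeminorm a f ≤ C * ‖f‖ := by
  constructor
  · intro hu
    obtain ⟨ε, hε, hεa⟩ := exists_pos_algebraMap_le_of_isUnit ha hu
    refine ⟨ε / 4, 3 * ‖a‖ + 1, by positivity, by positivity, fun f hf => ⟨?_, ?_⟩⟩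
    · exact mul_norm_le_rSeminorm ha hε.le hεa hf
    · exact (rSeminorm_le_mul_norm ha hf).trans (by gcongr; linarith)
  · rintro ⟨c, C, hc, -, hbound⟩
    by_contra hu
    obtain ⟨F, hF, hF1, hFa⟩ := exists_state_apply_eq_zero hu
    have hr : rSeminorm a F ≤ 0 := by
      simpa [hFa] using rSeminorm_le ha (isPosFunctional_of_norm_le_one hF hF1)
        IsPosFunctional.zero (sub_zero F).symm
    have hF_norm : 1 ≤ ‖F‖ := by
      simpa [hF1] using F.unit_le_opNorm 1 CStarRing.norm_one_le_one
    nlinarith [(hbound F (isHermitianFunctional_of_norm_le_one hF hF1)).1]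
end
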